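/- Let G be a topological group, let G° denote the identity component of G, and let u be an element of G°. Then the inclusion Z_{G°}(u) ⊆ Z_G(u) induces a well-defined injective group homomorphism of component groups A_{G°}(u) → A_G(u), where A_G(u) := Z_G(u)/Z_G(u)° and A_{G°}(u) := Z_{G°}(u)/Z_{G°}(u)°. -/

import Mathlib

instance connectedComponentOfOne_normal
    (G : Type*) [Group G] [TopologicalSpace G] [IsTopologicalGroup G] :
    (Subgroup.connectedComponentOfOne G).Normal := by
  constructor
  intro n hn g
  have hc : Continuous fun x : G => g * x * g⁻¹ := by fun_prop
  have h := hc.image_connectedComponent_subset (1 : G)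
  have : g * n * g⁻¹ ∈ connectedComponent (g * 1 * g⁻¹) := h ⟨n, hn, rfl⟩
  simp at this
  exact this

/-!
Inside `G`, the identity component of a subgroup `K` is `connectedComponentIn K 1`. This set is
connected and contains `1`, so it lies in `G°`; hence it is also the component of `1` in
`K ∩ G°`, i.e. `Z_G(u)° = Z_{G°}(u)°`. So an element of `Z_{G°}(u)` lies in `Z_{G°}(u)°` exactly
when it lies in `Z_G(u)°`, which is well-definedness and injectivity at once.
-/

theorem connectedComponentIn_inter_of_subset {α : Type*} [TopologicalSpace α] {F S : Set α}
    {x : α} (h : connectedComponentIn F x ⊆ S) :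
    connectedComponentIn (F ∩ S) x = connectedComponentIn F x := by
  refine (connectedComponentIn_mono x Set.inter_subset_left).antisymm ?_
  by_cases hx : x ∈ F
  · exact isPreconnected_connectedComponentIn.subset_connectedComponentIn
      (mem_connectedComponentIn hx) (Set.subset_inter (connectedComponentIn_subset F x) h)
  · simp [connectedComponentIn_eq_empty hx]

theorem QuotientGroup.map_injective_of_comap_eq {G H : Type*} [Group G] [Group H]
    {N : Subgroup G} [N.Normal] {M : Subgroup H} [M.Normal] {f : G →* H}
    (h : M.comap f = N) : Function.Injective (QuotientGroup.map N M f h.ge) :=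
  (QuotientGroup.injective_lift_iff _ _ _).mpr <| by
    rw [← MonoidHom.comap_ker, QuotientGroup.ker_mk', h]

namespace Subgroup

variable {G : Type*} [Group G] [TopologicalSpace G] [IsTopologicalGroup G]

theorem mem_connectedComponentOfOne_iff {K : Subgroup G} {x : K} :
    x ∈ connectedComponentOfOne K ↔ (x : G) ∈ connectedComponentIn (K : Set G) 1 := by
  rw [connectedComponentIn_eq_image K.one_mem, Subtype.val_injective.mem_set_image]
  rfl

theorem connectedComponentIn_subset_connectedComponentOfOne (K : Subgroup G) :
    connectedComponentIn (K : Set G) 1 ⊆ connectedComponentOfOne G :=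
  isPreconnected_connectedComponentIn.subset_connectedComponent
    (mem_connectedComponentIn K.one_mem)

theorem comap_inclusion_inf_connectedComponentOfOne {K L : Subgroup G}
    (h : connectedComponentIn (K : Set G) 1 ⊆ L) :
    (connectedComponentOfOne K).comap (inclusion (inf_le_left : K ⊓ L ≤ K)) =
      connectedComponentOfOne ↥(K ⊓ L) := by
  ext x
  rw [mem_comap, mem_connectedComponentOfOne_iff, mem_connectedComponentOfOne_iff, coe_inf,
    connectedComponentIn_inter_of_subset h]
  rfl

end Subgroup

theorem componentGroup_injection_general
    {G : Type*} [Group G] [TopologicalSpace G] [IsTopologicalGroup G] (u : G) :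
    ∃ f : (↥(Subgroup.centralizer {u} ⊓ Subgroup.connectedComponentOfOne G) ⧸
            Subgroup.connectedComponentOfOne
              ↥(Subgroup.centralizer {u} ⊓ Subgroup.connectedComponentOfOne G)) →*
          (↥(Subgroup.centralizer {u}) ⧸
            Subgroup.connectedComponentOfOne ↥(Subgroup.centralizer {u})),
      Function.Injective f ∧
      ∀ x : ↥(Subgroup.centralizer {u} ⊓ Subgroup.connectedComponentOfOne G),
        f (QuotientGroup.mk x) =
          QuotientGroup.mk (Subgroup.inclusion inf_le_left x) := by
  have hcomap := Subgroup.comap_inclusion_inf_connectedComponentOfOne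
    (Subgroup.connectedComponentIn_subset_connectedComponentOfOne (Subgroup.centralizer {u}))
  exact ⟨_, QuotientGroup.map_injective_of_comap_eq hcomap, fun _ => rfl⟩

/-- Let `G` be a topological group, `G°` its identity component, and `u ∈ G°`.
Then the inclusion `Z_{G°}(u) ⊆ Z_G(u)` of centralizers induces a well-defined
injective group homomorphism of component groups
`A_{G°}(u) = Z_{G°}(u)/Z_{G°}(u)° → A_G(u) = Z_G(u)/Z_G(u)°`. -/
theorem componentGroup_injection
    {G : Type*} [Group G] [TopologicalSpace G] [IsTopologicalGroup G] (u : G)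
    (hu : u ∈ Subgroup.connectedComponentOfOne G) :
    ∃ f : (↥(Subgroup.centralizer {u} ⊓ Subgroup.connectedComponentOfOne G) ⧸
            Subgroup.connectedComponentOfOne
              ↥(Subgroup.centralizer {u} ⊓ Subgroup.connectedComponentOfOne G)) →*
          (↥(Subgroup.centralizer {u}) ⧸
            Subgroup.connectedComponentOfOne ↥(Subgroup.centralizer {u})),
      Function.Injective f ∧
      ∀ x : ↥(Subgroup.centralizer {u} ⊓ Subgroup.connectedComponentOfOne G),
        f (QuotientGroup.mk x) =
          QuotientGroup.mk (Subgroup.inclusion inf_le_left x) :=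
  componentGroup_injection_general u
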